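/- arXiv:1412.6275 — 7 statements merged into one kernel-verified Lean document; each statement's English description precedes it below -/
import Mathlib

section
/- If H is an irredundant cover of a finite non-cyclic group G, then the size of H is at most the number of maximal cyclic subgroups of G. -/
def IsCover {G : Type*} [Group G] (S : Set (Subgroup G)) : Prop :=
  (∀ H ∈ S, H ≠ (⊤ : Subgroup G)) ∧ ∀ g : G, ∃ H ∈ S, g ∈ H

def IsIrredundantCover {G : Type*} [Group G] (S : Set (Subgroup G)) : Prop :=
  IsCover S ∧ ∀ T : Set (Subgroup G), T ⊂ S → ¬ IsCover T

def IsMaxCyclic {G : Type*} [Group G] (C : Subgroup G) : Prop :=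
  IsCyclic C ∧ ∀ D : Subgroup G, IsCyclic D → C ≤ D → C = D

def OnlyOneSizedCovers (G : Type*) [Group G] : Prop :=
  ∀ S T : Set (Subgroup G), IsIrredundantCover S → IsIrredundantCover T →
    S.ncard = T.ncard

/-! Each member `H` of an irredundant cover owns an element lying in no other member. A maximal
cyclic subgroup through that element is generated by a single element, so it lies inside some
member of the cover, which can only be `H`. Hence `H` is recovered from the maximal cyclic
subgroup, and sending each member to it is injective. -/

section

variable {G : Type*} [Group G]

theorem IsIrredundantCover.exists_mem_eq_of_mem {S : Set (Subgroup G)}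
    (hS : IsIrredundantCover S) {H : Subgroup G} (hH : H ∈ S) :
    ∃ g : G, ∀ K ∈ S, g ∈ K → K = H := by
  by_contra! hcontra
  refine hS.2 (S \ {H}) (Set.sdiff_singleton_ssubset.mpr hH)
    ⟨fun K hK => hS.1.1 K hK.1, fun g => ?_⟩
  obtain ⟨K, hK, hgK, hKH⟩ := hcontra g
  exact ⟨K, ⟨hK, hKH⟩, hgK⟩

theorem IsCover.exists_le_of_isCyclic {S : Set (Subgroup G)} (hS : IsCover S)
    {C : Subgroup G} (hC : IsCyclic C) : ∃ K ∈ S, C ≤ K := by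
  obtain ⟨x, rfl⟩ := C.isCyclic_iff_exists_zpowers_eq_top.mp hC
  obtain ⟨K, hK, hxK⟩ := hS.2 x
  exact ⟨K, hK, Subgroup.zpowers_le.mpr hxK⟩

theorem exists_isMaxCyclic_mem [Finite G] (g : G) : ∃ C : Subgroup G, IsMaxCyclic C ∧ g ∈ C := by
  obtain ⟨C, hgC, hC⟩ := Finite.exists_le_maximal (p := fun C : Subgroup G => IsCyclic C)
    (Subgroup.isCyclic_zpowers g)
  exact ⟨C, ⟨hC.prop, fun D hD hCD => le_antisymm hCD (hC.2 hD hCD)⟩,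
    Subgroup.zpowers_le.mp hgC⟩

end

theorem stmt1_general (G : Type*) [Group G] [Finite G]
    (S : Set (Subgroup G)) (hS : IsIrredundantCover S) :
    S.ncard ≤ {C : Subgroup G | IsMaxCyclic C}.ncard := by
  choose! private_elt h_private using fun H (hH : H ∈ S) => hS.exists_mem_eq_of_mem hH
  choose maxCyclic h_maxCyclic h_mem using exists_isMaxCyclic_mem (G := G)
  refine Set.ncard_le_ncard_of_injOn (fun H => maxCyclic (private_elt H))
    (fun H _ => h_maxCyclic _) fun H₁ h₁ H₂ h₂
      (h_eq : maxCyclic (private_elt H₁) = maxCyclic (private_elt H₂)) => ?_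
  obtain ⟨K, hK, hCK⟩ := hS.1.exists_le_of_isCyclic (h_maxCyclic (private_elt H₁)).1
  have hK₁ : K = H₁ := h_private H₁ h₁ K hK (hCK (h_mem _))
  have hK₂ : K = H₂ := h_private H₂ h₂ K hK (hCK (h_eq ▸ h_mem _))
  exact hK₁.symm.trans hK₂

theorem stmt1 (G : Type*) [Group G] [Finite G] (hG : ¬ IsCyclic G)
    (S : Set (Subgroup G)) (hS : IsIrredundantCover S) :
    S.ncard ≤ {C : Subgroup G | IsMaxCyclic C}.ncard :=
  stmt1_general G S hS
end

section
/- Let G be a finite group that admits only one-sized covers (all irredundant covers of G have the same cardinality). If N ⊴ G and G/N is non-cyclic, then G/N also admits only one-sized covers. -/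
theorem stmt4 (G : Type*) [Group G] [Finite G] (h : OnlyOneSizedCovers G)
    (N : Subgroup G) [N.Normal] (hQ : ¬ IsCyclic (G ⧸ N)) :
    OnlyOneSizedCovers (G ⧸ N) := by
  intro S T hS hT
  set π := QuotientGroup.mk' N with hπdef
  have hπ : Function.Surjective π := QuotientGroup.mk'_surjective N
  have hinj : Function.Injective (Subgroup.comap π) := Subgroup.comap_injective hπ
  have key : ∀ U : Set (Subgroup (G ⧸ N)), IsIrredundantCover U →
      IsIrredundantCover (Subgroup.comap π '' U) := by
    intro U hU
    constructor
    · constructor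
      · rintro _ ⟨H, hH, rfl⟩ htop
        exact hU.1.1 H hH (hinj (by simpa using htop))
      · intro g
        obtain ⟨H, hH, hg⟩ := hU.1.2 (π g)
        exact ⟨_, ⟨H, hH, rfl⟩, hg⟩
    · intro V hV hVc
      set U' := {H ∈ U | Subgroup.comap π H ∈ V} with hU'
      have hsub : U' ⊆ U := fun H hH => hH.1
      have himg : Subgroup.comap π '' U' = V := by
        apply Set.Subset.antisymm
        · rintro _ ⟨H, hH, rfl⟩; exact hH.2
        · intro K hK
          obtain ⟨H, hH, rfl⟩ := hV.1 hK
          exact ⟨H, ⟨hH, hK⟩, rfl⟩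
      have hstrict : U' ⊂ U := by
        refine ⟨hsub, fun hle => ?_⟩
        obtain ⟨K, hK1, hK2⟩ := Set.exists_of_ssubset hV
        obtain ⟨H, hH, rfl⟩ := hK1
        exact hK2 (hle hH).2
      apply hU.2 U' hstrict
      constructor
      · intro H hH; exact hU.1.1 H (hsub hH)
      · intro q
        obtain ⟨g, rfl⟩ := hπ q
        obtain ⟨K, hK, hg⟩ := hVc.2 g
        rw [← himg] at hK
        obtain ⟨H, hH, rfl⟩ := hK
        exact ⟨H, hH, hg⟩
  have := h _ _ (key S hS) (key T hT)
  rwa [Set.ncard_image_of_injective _ hinj, Set.ncard_image_of_injective _ hinj] at this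
end

section
/- Let G be a finite solvable group and p a prime divisor of |G|. If every complemented chief factor of G that is a p-group is central in G, then G is p-nilpotent (i.e. G has a normal p-complement). -/
/-- `H/K` is a chief factor of `G`: both are normal in `G`, `K < H`, and there is
no normal subgroup of `G` strictly between them. -/
def IsChiefFactor {G : Type*} [Group G] (H K : Subgroup G) : Prop :=
  H.Normal ∧ K.Normal ∧ K < H ∧
    ∀ L : Subgroup G, L.Normal → K ≤ L → L ≤ H → L = K ∨ L = H

/-- The chief factor `H/K` is complemented, i.e. has a complement in `G/K`. -/
def IsComplementedFactor {G : Type*} [Group G] (H K : Subgroup G) : Prop :=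
  ∃ A : Subgroup G, K ≤ A ∧ A ⊔ H = ⊤ ∧ A ⊓ H = K

/-!
Induction on `|G|`. A minimal normal subgroup `N` of the solvable group `G` is abelian, and the
hypothesis passes to `G/N`, which therefore has a normal `p`-complement `M/N`. If `p ∤ |N|`, then
`M` is a normal `p`-complement of `G`. Otherwise `N` is a `p`-group, and by Schur–Zassenhaus `N`
has a complement `K` in `M`; as the complements of the abelian normal Hall subgroup `N` of `M` are
`N`-conjugate, the Frattini argument gives `G = N · N_G(K)`. Since `N` is abelian,
`N ∩ N_G(K)` is normal in `G`, so by minimality either `N ≤ N_G(K)`, or `N_G(K)` is a complement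
of the chief factor `N/1`, which is then central by hypothesis, so again `N ≤ N_G(K)`. Hence `K`
is a normal `p`-complement of `G`.
-/

open Subgroup MulAction Pointwise

namespace Subgroup

variable {G : Type*} [Group G]

theorem card_subgroupOf_of_le {H K : Subgroup G} (h : H ≤ K) :
    Nat.card (H.subgroupOf K) = Nat.card H :=
  Nat.card_congr (subgroupOfEquivOfLe h).toEquiv

theorem card_mul_relIndex {H K : Subgroup G} (h : H ≤ K) :
    Nat.card H * H.relIndex K = Nat.card K := by
  rw [← card_subgroupOf_of_le h, relIndex, card_mul_index]

theorem conj_smul_eq_self_iff_mem_normalizer {K : Subgroup G} {g : G} :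
    MulAut.conj g • K = K ↔ g ∈ normalizer K :=
  conjAct_pointwise_smul_iff

theorem normal_inf_of_sup_eq_top {A N : Subgroup G} [hN : N.Normal] [IsMulCommutative N]
    (h : A ⊔ N = ⊤) : (A ⊓ N).Normal := by
  refine ⟨fun x hx g => ?_⟩
  obtain ⟨a, ha, n, hn, rfl⟩ := mem_sup_of_normal_right.mp (h ▸ mem_top g)
  have hnx : n * x * n⁻¹ = x := by
    rw [setLike_mul_comm hn hx.2, mul_inv_cancel_right]
  rw [mul_inv_rev, ← mul_assoc, mul_assoc a, mul_assoc a, hnx]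
  exact ⟨A.mul_mem (A.mul_mem ha hx.1) (A.inv_mem ha), hN.conj_mem x hx.2 a⟩

theorem sup_normalizer_eq_top_of_forall_exists_conj_smul_eq {N K : Subgroup G}
    (h : ∀ g : G, ∃ n ∈ N, MulAut.conj n • K = MulAut.conj g • K) :
    N ⊔ normalizer K = ⊤ := by
  refine eq_top_iff.mpr fun g _ => ?_
  obtain ⟨n, hn, hng⟩ := h g
  rw [← mul_inv_cancel_left n g]
  refine mul_mem_sup hn (conj_smul_eq_self_iff_mem_normalizer.mp ?_)
  rw [map_mul, mul_smul, ← hng, ← mul_smul, ← map_mul, inv_mul_cancel, map_one, one_smul]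

theorem exists_le_card_mul_eq_of_coprime {N M : Subgroup G} [N.Normal] (hNM : N ≤ M)
    (hcop : (Nat.card N).Coprime (N.relIndex M)) :
    ∃ K ≤ M, Nat.card N * Nat.card K = Nat.card M := by
  rw [← card_subgroupOf_of_le hNM] at hcop
  obtain ⟨K, hK⟩ := exists_right_complement'_of_coprime hcop
  refine ⟨K.map M.subtype, map_subtype_le K, ?_⟩
  rw [card_map_of_injective M.subtype_injective, ← card_subgroupOf_of_le hNM, hK.card_mul_card]

variable [Finite G]

section SchurZassenhaus

variable {H : Subgroup G} [H.Normal] [IsMulCommutative H]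

theorem IsComplement'.exists_eq_stabilizer (hH : (Nat.card H).Coprime H.index)
    {K : Subgroup G} (hK : H.IsComplement' K) : ∃ α : H.QuotientDiff, K = stabilizer G α := by
  refine ⟨Quotient.mk'' ⟨K, hK.symm⟩, eq_of_le_of_card_ge (fun k hk => ?_) ?_⟩
  · exact congr_arg Quotient.mk'' (Subtype.ext (rightCoset_mem_rightCoset K (K.inv_mem hk)))
  · refine Nat.le_of_mul_le_mul_left ?_ (Nat.card_pos (α := H))
    exact ((isComplement'_stabilizer_of_coprime hH).card_mul_card.trans hK.card_mul_card.symm).le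

theorem exists_mem_conj_smul_eq_of_isComplement' (hH : (Nat.card H).Coprime H.index)
    {K₁ K₂ : Subgroup G} (h₁ : H.IsComplement' K₁) (h₂ : H.IsComplement' K₂) :
    ∃ h ∈ H, MulAut.conj h • K₁ = K₂ := by
  obtain ⟨α₁, rfl⟩ := h₁.exists_eq_stabilizer hH
  obtain ⟨α₂, rfl⟩ := h₂.exists_eq_stabilizer hH
  obtain ⟨h, rfl⟩ := exists_smul_eq hH α₁ α₂
  exact ⟨h, h.2, (stabilizer_smul_eq_stabilizer_map_conj (h : G) α₁).symm⟩

end SchurZassenhaus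

theorem sup_normalizer_eq_top_of_card_mul_eq {N M K : Subgroup G} [N.Normal] [M.Normal]
    [IsMulCommutative N] (hNM : N ≤ M) (hKM : K ≤ M)
    (hcard : Nat.card N * Nat.card K = Nat.card M) (hcop : (Nat.card N).Coprime (Nat.card K)) :
    N ⊔ normalizer K = ⊤ := by
  have hcomplement : ∀ L ≤ M, Nat.card L = Nat.card K →
      (N.subgroupOf M).IsComplement' (L.subgroupOf M) := fun L hLM hL =>
    isComplement'_of_coprime
      (by rw [card_subgroupOf_of_le hNM, card_subgroupOf_of_le hLM, hL, hcard])
      (by rwa [card_subgroupOf_of_le hNM, card_subgroupOf_of_le hLM, hL])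
  have hindex : (N.subgroupOf M).index = Nat.card K :=
    Nat.eq_of_mul_eq_mul_left Nat.card_pos ((card_mul_relIndex hNM).trans hcard.symm)
  refine sup_normalizer_eq_top_of_forall_exists_conj_smul_eq fun g => ?_
  have hgKM : MulAut.conj g • K ≤ M := by
    rw [← Normal.conj_smul_eq_self g M]
    exact pointwise_smul_le_pointwise_smul_iff.mpr hKM
  obtain ⟨h, hh, hconj⟩ := exists_mem_conj_smul_eq_of_isComplement'
    (by rwa [card_subgroupOf_of_le hNM, hindex]) (hcomplement K hKM rfl)
    (hcomplement _ hgKM (Nat.card_congr (equivSMul _ K).toEquiv.symm))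
  rw [conj_smul_subgroupOf hKM, subgroupOf_inj, inf_of_le_left (conj_smul_le_of_le hKM h),
    inf_of_le_left hgKM] at hconj
  exact ⟨h, mem_subgroupOf.mp hh, hconj⟩

end Subgroup

section ChiefFactor

variable {G Q : Type*} [Group G] [Group Q]

theorem IsChiefFactor.comap {f : G →* Q} (hf : Function.Surjective f) {H K : Subgroup Q}
    (h : IsChiefFactor H K) : IsChiefFactor (H.comap f) (K.comap f) := by
  obtain ⟨hH, hK, hlt, hmax⟩ := h
  refine ⟨hH.comap f, hK.comap f, (comap_lt_comap_of_surjective hf).mpr hlt,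
    fun L hL hKL hLH => ?_⟩
  rw [← comap_map_eq_self ((ker_le_comap f K).trans hKL)]
  refine (hmax _ (hL.map f hf) ?_ (map_le_iff_le_comap.mpr hLH)).imp
    (congr_arg (Subgroup.comap f)) (congr_arg (Subgroup.comap f))
  exact (map_comap_eq_self_of_surjective hf K).symm.trans_le (map_mono hKL)

theorem IsComplementedFactor.comap {f : G →* Q} (hf : Function.Surjective f)
    {H K : Subgroup Q} (h : IsComplementedFactor H K) :
    IsComplementedFactor (H.comap f) (K.comap f) := by
  obtain ⟨A, hKA, hsup, hinf⟩ := h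
  exact ⟨A.comap f, comap_mono hKA, by rw [comap_sup_eq f _ _ hf, hsup, comap_top],
    by rw [← comap_inf, hinf]⟩

theorem exists_isChiefFactor_bot [Finite G] [Nontrivial G] :
    ∃ N : Subgroup G, IsChiefFactor N ⊥ := by
  obtain ⟨N, hN, hmin⟩ := exists_minimal_of_wellFoundedLT
    (fun N : Subgroup G => N.Normal ∧ N ≠ ⊥) ⟨⊤, inferInstance, top_ne_bot⟩
  refine ⟨N, hN.1, inferInstance, bot_lt_iff_ne_bot.mpr hN.2, fun L hL _ hLN => ?_⟩
  by_cases hL' : L = ⊥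
  · exact Or.inl hL'
  · exact Or.inr (le_antisymm hLN (hmin ⟨hL, hL'⟩ hLN))

theorem IsChiefFactor.isMulCommutative [Group.IsSolvable G] {N : Subgroup G}
    (h : IsChiefFactor N ⊥) : IsMulCommutative N := by
  have := h.1
  rw [← commutator_self_eq_bot_iff]
  exact (h.2.2.2 _ (commutator_normal N N) bot_le (commutator_le_left N N)).resolve_right
    (Group.IsSolvable.commutator_lt_of_ne_bot h.2.2.1.ne').ne

theorem IsChiefFactor.exists_card_eq_prime_pow [Finite G] {N : Subgroup G}
    (h : IsChiefFactor N ⊥) [IsMulCommutative N] {p : ℕ} (hp : p.Prime)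
    (hdvd : p ∣ Nat.card N) : ∃ a : ℕ, Nat.card N = p ^ a := by
  have := Fact.mk hp
  have := h.1
  obtain ⟨P⟩ : Nonempty (Sylow p N) := inferInstance
  have := P.characteristic_of_normal (normal_of_isMulCommutative _)
  have hPN : (P : Subgroup N).map N.subtype = N := by
    refine (h.2.2.2 _ inferInstance bot_le (map_subtype_le _)).resolve_left fun hbot => ?_
    exact P.ne_bot_of_dvd_card hdvd ((map_eq_bot_iff_of_injective _ N.subtype_injective).mp hbot)
  rw [← hPN, card_map_of_injective N.subtype_injective]
  exact P.isPGroup'.exists_card_eq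

theorem IsChiefFactor.le_or_isComplementedFactor {N A : Subgroup G} (h : IsChiefFactor N ⊥)
    [IsMulCommutative N] (hA : A ⊔ N = ⊤) : N ≤ A ∨ IsComplementedFactor N ⊥ := by
  have := h.1
  exact (h.2.2.2 (A ⊓ N) (normal_inf_of_sup_eq_top hA) bot_le inf_le_right).symm.imp
    inf_eq_right.mp fun hbot => ⟨A, bot_le, hA, hbot⟩

end ChiefFactor

section PComplement

variable (p : ℕ) (G : Type*) [Group G]

def ComplementedChiefPFactorsAreCentral : Prop :=
  ∀ H K : Subgroup G, IsChiefFactor H K → IsComplementedFactor H K →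
    (∃ n : ℕ, Nat.card H = Nat.card K * p ^ n) → ⁅(⊤ : Subgroup G), H⁆ ≤ K

def HasNormalPComplement : Prop :=
  ∃ N : Subgroup G, N.Normal ∧ ¬ p ∣ Nat.card N ∧ ∃ k : ℕ, N.index = p ^ k

variable {p G}

theorem ComplementedChiefPFactorsAreCentral.of_surjective [Finite G] {Q : Type*} [Group Q]
    {f : G →* Q} (hf : Function.Surjective f) (h : ComplementedChiefPFactorsAreCentral p G) :
    ComplementedChiefPFactorsAreCentral p Q := by
  have := Finite.of_surjective f hf
  rintro H K hchief hcompl ⟨n, hn⟩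
  have hKH := hchief.2.2.1.le
  have hrel : K.relIndex H = p ^ n :=
    Nat.eq_of_mul_eq_mul_left Nat.card_pos ((card_mul_relIndex hKH).trans hn)
  have hcentral := h _ _ (hchief.comap hf) (hcompl.comap hf) ⟨n, by
    rw [← card_mul_relIndex (comap_mono hKH), relIndex_comap,
      map_comap_eq_self_of_surjective hf, hrel]⟩
  calc ⁅(⊤ : Subgroup Q), H⁆ = ⁅(⊤ : Subgroup G), H.comap f⁆.map f := by
        rw [map_commutator, map_top_of_surjective f hf, map_comap_eq_self_of_surjective hf]
    _ ≤ (K.comap f).map f := map_mono hcentral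
    _ = K := map_comap_eq_self_of_surjective hf K

theorem HasNormalPComplement.exists_le_of_quotient {N : Subgroup G} [N.Normal]
    (h : HasNormalPComplement p (G ⧸ N)) :
    ∃ M : Subgroup G, M.Normal ∧ N ≤ M ∧ ¬ p ∣ N.relIndex M ∧ ∃ k : ℕ, M.index = p ^ k := by
  obtain ⟨M, hM, hpM, k, hk⟩ := h
  have hsurj := QuotientGroup.mk'_surjective N
  have hrel := relIndex_ker (K := M.comap (QuotientGroup.mk' N)) (QuotientGroup.mk' N)
  rw [QuotientGroup.ker_mk', map_comap_eq_self_of_surjective hsurj] at hrel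
  refine ⟨M.comap (QuotientGroup.mk' N), hM.comap _,
    (QuotientGroup.ker_mk' N).ge.trans (ker_le_comap _ M), hrel ▸ hpM, k, ?_⟩
  rwa [index_comap_of_surjective _ hsurj]

theorem HasNormalPComplement.of_quotient_of_not_dvd {N : Subgroup G} [N.Normal] (hp : p.Prime)
    (hN : ¬ p ∣ Nat.card N) (h : HasNormalPComplement p (G ⧸ N)) : HasNormalPComplement p G := by
  obtain ⟨M, hM, hNM, hpM, k, hk⟩ := h.exists_le_of_quotient
  exact ⟨M, hM, card_mul_relIndex hNM ▸ hp.not_dvd_mul hN hpM, k, hk⟩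

theorem HasNormalPComplement.of_quotient_of_isChiefFactor [Finite G] {N : Subgroup G} [N.Normal]
    (hN : IsChiefFactor N ⊥) [IsMulCommutative N] (hp : p.Prime) {a : ℕ}
    (hcard : Nat.card N = p ^ a) (hcentral : IsComplementedFactor N ⊥ → ⁅(⊤ : Subgroup G), N⁆ ≤ ⊥)
    (h : HasNormalPComplement p (G ⧸ N)) : HasNormalPComplement p G := by
  obtain ⟨M, hM, hNM, hpM, k, hk⟩ := h.exists_le_of_quotient
  have hcop : (Nat.card N).Coprime (N.relIndex M) :=
    hcard ▸ Nat.Coprime.pow_left a ((Nat.Prime.coprime_iff_not_dvd hp).mpr hpM)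
  obtain ⟨K, hKM, hNK⟩ := exists_le_card_mul_eq_of_coprime hNM hcop
  have hK : Nat.card K = N.relIndex M :=
    Nat.eq_of_mul_eq_mul_left Nat.card_pos (hNK.trans (card_mul_relIndex hNM).symm)
  have hfrattini := sup_normalizer_eq_top_of_card_mul_eq hNM hKM hNK (hK ▸ hcop)
  have hN_le : N ≤ normalizer K := by
    refine (hN.le_or_isComplementedFactor (sup_comm N _ ▸ hfrattini)).elim id fun hc => ?_
    have hcenter : N ≤ center G := by
      rw [← centralizer_univ, ← coe_top, ← commutator_eq_bot_iff_le_centralizer,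
        commutator_comm, ← le_bot_iff]
      exact hcentral hc
    exact hcenter.trans (center_le_normalizer _)
  have hKn : K.Normal := normalizer_eq_top_iff.mp (top_le_iff.mp (hfrattini ▸ sup_le hN_le le_rfl))
  refine ⟨K, hKn, hK ▸ hpM, a + k, Nat.eq_of_mul_eq_mul_left (Nat.card_pos (α := K)) ?_⟩
  rw [card_mul_index, ← M.card_mul_index, ← hNK, hcard, hk, pow_add]
  ring

theorem hasNormalPComplement_of_complementedChiefPFactorsAreCentral [Finite G]
    [Group.IsSolvable G] (hp : p.Prime) (h : ComplementedChiefPFactorsAreCentral p G) :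
    HasNormalPComplement p G := by
  induction hG : Nat.card G using Nat.strong_induction_on generalizing G with
  | _ n ih =>
  rcases subsingleton_or_nontrivial G with hsub | hnontriv
  · exact ⟨⊤, inferInstance, by simpa using hp.not_dvd_one, 0, index_top⟩
  obtain ⟨N, hN⟩ := exists_isChiefFactor_bot (G := G)
  have := hN.1
  have := hN.isMulCommutative
  have hlt : Nat.card (G ⧸ N) < n := by
    rw [← hG, card_eq_card_quotient_mul_card_subgroup N]
    exact lt_mul_right Nat.card_pos ((one_lt_card_iff_ne_bot N).mpr hN.2.2.1.ne')
  have hQ := ih _ hlt (h.of_surjective (QuotientGroup.mk'_surjective N)) rfl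
  by_cases hpN : p ∣ Nat.card N
  · obtain ⟨a, ha⟩ := hN.exists_card_eq_prime_pow hp hpN
    exact hQ.of_quotient_of_isChiefFactor hN hp ha fun hc => h N ⊥ hN hc ⟨a, by simpa⟩
  · exact hQ.of_quotient_of_not_dvd hp hpN

end PComplement

theorem stmt6_general (G : Type*) [Group G] [Finite G] [Group.IsSolvable G]
    (p : ℕ) (hp : p.Prime)
    (hyp : ∀ H K : Subgroup G, IsChiefFactor H K → IsComplementedFactor H K →
      (∃ n : ℕ, Nat.card H = Nat.card K * p ^ n) →
      ⁅(⊤ : Subgroup G), H⁆ ≤ K) :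
    ∃ N : Subgroup G, N.Normal ∧ ¬ p ∣ Nat.card N ∧ ∃ k : ℕ, N.index = p ^ k :=
  hasNormalPComplement_of_complementedChiefPFactorsAreCentral hp hyp

theorem stmt6 (G : Type*) [Group G] [Finite G] [Group.IsSolvable G]
    (p : ℕ) (hp : p.Prime) (hdvd : p ∣ Nat.card G)
    (hyp : ∀ H K : Subgroup G, IsChiefFactor H K → IsComplementedFactor H K →
      (∃ n : ℕ, Nat.card H = Nat.card K * p ^ n) →
      ⁅(⊤ : Subgroup G), H⁆ ≤ K) :
    ∃ N : Subgroup G, N.Normal ∧ ¬ p ∣ Nat.card N ∧ ∃ k : ℕ, N.index = p ^ k :=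
  stmt6_general G p hp hyp
end

section
/- Under the hypotheses of the previous setting (H a core-free maximal cyclic subgroup of G complementing a normal subgroup N), if K is a conjugate of H distinct from H, then H ∩ K = {1}. -/
/-!
`K` is again maximal, so `H ⊔ K = G`. Since `H` and `K` are abelian, both normalize `H ⊓ K`,
which is therefore a normal subgroup of `G` inside `H`, hence inside the trivial core of `H`.
-/

namespace Subgroup

variable {G : Type*} [Group G]

theorem le_normalizer_of_le_of_isMulCommutative {L M : Subgroup G} [IsMulCommutative L]
    (hML : M ≤ L) : L ≤ normalizer (M : Set G) :=
  (le_centralizer L).trans <| (centralizer_le hML).trans <| centralizer_le_normalizer _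

theorem normal_inf_of_sup_eq_top_s8 {H K : Subgroup G} [IsMulCommutative H] [IsMulCommutative K]
    (hsup : H ⊔ K = ⊤) : (H ⊓ K).Normal := by
  rw [← normalizer_eq_top_iff, ← top_le_iff, ← hsup]
  exact sup_le (le_normalizer_of_le_of_isMulCommutative inf_le_left)
    (le_normalizer_of_le_of_isMulCommutative inf_le_right)

end Subgroup

open Subgroup in
theorem stmt8_general (G : Type*) [Group G] (H : Subgroup G)
    (hcyc : IsCyclic H) (hmax : IsCoatom H) (hcore : H.normalCore = ⊥)
    (g : G) (K : Subgroup G) (hK : K = H.map (MulAut.conj g).toMonoidHom)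
    (hne : K ≠ H) : H ⊓ K = ⊥ := by
  have : IsMulCommutative H := by
    let := hcyc.commGroup
    infer_instance
  have : IsMulCommutative K := hK ▸ inferInstance
  have hKmax : IsCoatom K := hK ▸ ((MulAut.conj g).mapSubgroup.isCoatom_iff H).mpr hmax
  have : (H ⊓ K).Normal := normal_inf_of_sup_eq_top_s8 (hmax.sup_eq_top_of_ne hKmax hne.symm)
  exact le_bot_iff.mp (hcore ▸ normal_le_normalCore.mpr inf_le_left)

theorem stmt8 (G : Type*) [Group G] [Finite G] (H N : Subgroup G)
    (hcyc : IsCyclic H) (hmax : IsCoatom H) (hcore : H.normalCore = ⊥)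
    [N.Normal] (hcompl : Subgroup.IsComplement' N H)
    (g : G) (K : Subgroup G) (hK : K = H.map (MulAut.conj g).toMonoidHom)
    (hne : K ≠ H) : H ⊓ K = ⊥ :=
  stmt8_general G H hcyc hmax hcore g K hK hne
end

section
/- Let p be a prime and n a positive integer not divisible by p, and let G = Cp ⋊ Cn with the action of Cn on Cp non-trivial. Then every irredundant cover of G has size exactly p + 1. -/
namespace Stmt14Aux

open Multiplicative SemidirectProduct

lemma ofAdd_pow_zmod {p : ℕ} (k : ℕ) (m : ZMod p) :
    (ofAdd m) ^ k = ofAdd ((k : ZMod p) * m) := by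
  rw [← ofAdd_toAdd ((ofAdd m) ^ k), toAdd_pow, nsmul_eq_mul, toAdd_ofAdd]

lemma exp_n {n : ℕ} (a : Multiplicative (ZMod n)) : a ^ n = 1 := by
  have h : toAdd (a ^ n) = 0 := by rw [toAdd_pow]; simp [nsmul_eq_mul]
  rwa [toAdd_eq_zero] at h

/-- the generator of `Multiplicative (ZMod n)` -/
def gen (n : ℕ) : Multiplicative (ZMod n) := ofAdd 1

lemma gen_pow {n : ℕ} [NeZero n] (b : Multiplicative (ZMod n)) :
    gen n ^ (toAdd b).val = b := by
  rw [gen, ofAdd_pow_zmod, mul_one, ZMod.natCast_zmod_val, ofAdd_toAdd]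

variable {p n : ℕ}
variable (φ : Multiplicative (ZMod n) →* MulAut (Multiplicative (ZMod p)))

/-- the multiplier of the automorphism `φ b` -/
def cc (b : Multiplicative (ZMod n)) : ZMod p := toAdd (φ b (ofAdd 1))

lemma phi_apply [NeZero p] (b : Multiplicative (ZMod n)) (x : Multiplicative (ZMod p)) :
    φ b x = ofAdd (toAdd x * cc φ b) := by
  have h1 : x = (ofAdd (1 : ZMod p)) ^ (toAdd x).val := by
    rw [ofAdd_pow_zmod, mul_one, ZMod.natCast_zmod_val, ofAdd_toAdd]
  calc φ b x = φ b ((ofAdd (1 : ZMod p)) ^ (toAdd x).val) := by rw [← h1]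
    _ = (φ b (ofAdd (1 : ZMod p))) ^ (toAdd x).val := by rw [map_pow]
    _ = ofAdd ((((toAdd x).val : ℕ) : ZMod p) * cc φ b) := by
        rw [← ofAdd_toAdd (φ b (ofAdd 1)), ofAdd_pow_zmod]; rfl
    _ = ofAdd (toAdd x * cc φ b) := by rw [ZMod.natCast_zmod_val]

lemma cc_one : cc φ 1 = 1 := by simp [cc]

lemma cc_mul [NeZero p] (b b' : Multiplicative (ZMod n)) :
    cc φ (b * b') = cc φ b * cc φ b' := by
  have : φ (b * b') (ofAdd 1) = φ b (φ b' (ofAdd 1)) := by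
    rw [map_mul]; rfl
  rw [cc, this, phi_apply, toAdd_ofAdd, mul_comm]
  rfl

lemma cc_pow [NeZero p] (b : Multiplicative (ZMod n)) (k : ℕ) :
    cc φ (b ^ k) = cc φ b ^ k := by
  induction k with
  | zero => simpa using cc_one φ
  | succ k ih => rw [pow_succ, pow_succ, cc_mul, ih]

lemma cc_mul_inv [NeZero p] (b : Multiplicative (ZMod n)) :
    cc φ b * cc φ b⁻¹ = 1 := by
  rw [← cc_mul, mul_inv_cancel, cc_one]

lemma cc_eq_one_iff [NeZero p] (b : Multiplicative (ZMod n)) :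
    cc φ b = 1 ↔ φ b = 1 := by
  constructor
  · intro h
    ext x
    rw [phi_apply, h, mul_one, ofAdd_toAdd]; rfl
  · intro h; rw [cc, h]; rfl

lemma cc_gen_ne_one [NeZero p] [NeZero n] (hφ : φ ≠ 1) : cc φ (gen n) ≠ 1 := by
  intro h
  rw [cc_eq_one_iff] at h
  apply hφ
  refine MonoidHom.ext fun b => ?_
  rw [MonoidHom.one_apply, ← gen_pow b, map_pow, h, one_pow]

/-- the conjugates of the complement -/
def CC [NeZero p] (a : ZMod p) :
    Subgroup (Multiplicative (ZMod p) ⋊[φ] Multiplicative (ZMod n)) where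
  carrier := {y | toAdd y.left = a * (1 - cc φ y.right)}
  one_mem' := by simp [cc_one]
  mul_mem' := by
    intro y z hy hz
    simp only [Set.mem_setOf_eq] at *
    rw [mul_left, toAdd_mul, phi_apply, toAdd_ofAdd, mul_right, cc_mul, hy, hz]
    ring
  inv_mem' := by
    intro y hy
    simp only [Set.mem_setOf_eq] at *
    rw [inv_left, phi_apply, toAdd_ofAdd, toAdd_inv, inv_right, hy]
    have h := cc_mul_inv φ y.right
    linear_combination a * h

lemma mem_CC [NeZero p] {a : ZMod p}
    {y : Multiplicative (ZMod p) ⋊[φ] Multiplicative (ZMod n)} :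
    y ∈ CC φ a ↔ toAdd y.left = a * (1 - cc φ y.right) := Iff.rfl

/-- preferred generator of `CC a` -/
def xx [NeZero p] (a : ZMod p) : Multiplicative (ZMod p) ⋊[φ] Multiplicative (ZMod n) :=
  ⟨ofAdd (a * (1 - cc φ (gen n))), gen n⟩

lemma xx_mem_CC [NeZero p] (a : ZMod p) : xx φ a ∈ CC φ a := by
  rw [mem_CC]; simp [xx]

lemma xx_pow [NeZero p] (a : ZMod p) (k : ℕ) :
    xx φ a ^ k = ⟨ofAdd (a * (1 - cc φ (gen n) ^ k)), gen n ^ k⟩ := by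
  induction k with
  | zero => ext <;> simp
  | succ k ih =>
    rw [pow_succ, ih]
    ext
    · show ofAdd (a * (1 - cc φ (gen n) ^ k)) * φ (gen n ^ k) (ofAdd (a * (1 - cc φ (gen n)))) =
        ofAdd (a * (1 - cc φ (gen n) ^ (k + 1)))
      rw [phi_apply, toAdd_ofAdd, cc_pow, ← ofAdd_add]
      congr 1
      ring
    · show gen n ^ k * gen n = gen n ^ (k + 1)
      rw [pow_succ]

lemma eq_xx_pow [NeZero p] [NeZero n] {a : ZMod p}
    {y : Multiplicative (ZMod p) ⋊[φ] Multiplicative (ZMod n)} (hy : y ∈ CC φ a) :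
    y = xx φ a ^ (toAdd y.right).val := by
  rw [mem_CC] at hy
  rw [xx_pow]
  ext
  · rw [← cc_pow, gen_pow, ← hy, ofAdd_toAdd]
  · rw [gen_pow]

lemma inl_mem [NeZero p] [NeZero n] [Fact p.Prime]
    {H : Subgroup (Multiplicative (ZMod p) ⋊[φ] Multiplicative (ZMod n))}
    {z : Multiplicative (ZMod p) ⋊[φ] Multiplicative (ZMod n)}
    (hz : z ∈ H) (hr : z.right = 1) (hl : z.left ≠ 1) (l : ZMod p) :
    (inl (ofAdd l) : Multiplicative (ZMod p) ⋊[φ] Multiplicative (ZMod n)) ∈ H := by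
  have hm : toAdd z.left ≠ 0 := by
    intro h; exact hl (by rw [← ofAdd_toAdd z.left, h]; rfl)
  have hz' : z = inl z.left := by ext <;> simp [hr]
  set k := (l * (toAdd z.left)⁻¹).val with hk
  have hzk : z ^ k = inl (ofAdd l) := by
    rw [hz', ← map_pow, ← ofAdd_toAdd z.left, ofAdd_pow_zmod, hk,
      ZMod.natCast_zmod_val, mul_assoc, inv_mul_cancel₀ hm, mul_one]
  rw [← hzk]
  exact pow_mem hz k

lemma eq_top [NeZero p] [NeZero n] [Fact p.Prime]
    {H : Subgroup (Multiplicative (ZMod p) ⋊[φ] Multiplicative (ZMod n))}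
    {z w : Multiplicative (ZMod p) ⋊[φ] Multiplicative (ZMod n)}
    (hz : z ∈ H) (hr : z.right = 1) (hl : z.left ≠ 1)
    (hw : w ∈ H) (hwr : w.right = gen n) : H = ⊤ := by
  have hCp : ∀ l : ZMod p,
      (inl (ofAdd l) : Multiplicative (ZMod p) ⋊[φ] Multiplicative (ZMod n)) ∈ H :=
    inl_mem φ hz hr hl
  have hCp' : ∀ x : Multiplicative (ZMod p),
      (inl x : Multiplicative (ZMod p) ⋊[φ] Multiplicative (ZMod n)) ∈ H := by
    intro x; have := hCp (toAdd x); rwa [ofAdd_toAdd] at this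
  have hgw : (inr (gen n) : Multiplicative (ZMod p) ⋊[φ] Multiplicative (ZMod n)) ∈ H := by
    have heq : (inl w.left)⁻¹ * w = inr (gen n) := by
      ext <;> simp [hwr]
    rw [← heq]
    exact mul_mem (inv_mem (hCp' w.left)) hw
  rw [Subgroup.eq_top_iff']
  intro y
  have h2 : (inr y.right : Multiplicative (ZMod p) ⋊[φ] Multiplicative (ZMod n)) ∈ H := by
    have := pow_mem hgw (toAdd y.right).val
    rwa [← map_pow, gen_pow] at this
  rw [← inl_left_mul_inr_right y]
  exact mul_mem (hCp' y.left) h2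

lemma eq_CC_of_mem [NeZero p] [NeZero n] [Fact p.Prime]
    {H : Subgroup (Multiplicative (ZMod p) ⋊[φ] Multiplicative (ZMod n))}
    (hH : H ≠ ⊤) {a : ZMod p} (hx : xx φ a ∈ H) : H = CC φ a := by
  have htriv : ∀ z ∈ H, z.right = 1 → z = 1 := by
    intro z hz hr
    by_contra hne
    have hl : z.left ≠ 1 := by
      intro h
      exact hne (SemidirectProduct.ext h hr)
    exact hH (eq_top φ hz hr hl hx rfl)
  apply le_antisymm
  · intro y hy
    set k := (toAdd y.right).val with hk
    have hxk : xx φ a ^ k ∈ H := pow_mem hx k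
    have hzr : ((xx φ a ^ k)⁻¹ * y).right = 1 := by
      rw [mul_right, inv_right, xx_pow]
      show (gen n ^ k)⁻¹ * y.right = 1
      rw [hk, gen_pow, inv_mul_cancel]
    have hz1 := htriv _ (mul_mem (inv_mem hxk) hy) hzr
    rw [inv_mul_eq_one] at hz1
    rw [← hz1]
    exact pow_mem (xx_mem_CC φ a) k
  · intro y hy
    rw [eq_xx_pow φ hy]
    exact pow_mem hx _

end Stmt14Aux

open Multiplicative SemidirectProduct Stmt14Aux

theorem stmt14 (p n : ℕ) (hp : p.Prime) (hn : 0 < n) (hpn : ¬ p ∣ n)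
    (φ : Multiplicative (ZMod n) →* MulAut (Multiplicative (ZMod p)))
    (hφ : φ ≠ 1)
    (S : Set (Subgroup (Multiplicative (ZMod p) ⋊[φ] Multiplicative (ZMod n))))
    (hS : IsIrredundantCover S) : S.ncard = p + 1 := by
  haveI : Fact p.Prime := ⟨hp⟩
  haveI : NeZero p := ⟨hp.ne_zero⟩
  haveI : NeZero n := ⟨hn.ne'⟩
  obtain ⟨⟨hproper, hcover⟩, hirr⟩ := hS
  -- all the CC a are members of S
  have hCmem : ∀ a : ZMod p, CC φ a ∈ S := by
    intro a
    obtain ⟨H, hHS, hxH⟩ := hcover (xx φ a)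
    rwa [eq_CC_of_mem φ (hproper H hHS) hxH] at hHS
  -- a generator of the kernel of φ
  obtain ⟨b₀', hb₀gen⟩ := IsCyclic.exists_generator (α := φ.ker)
  set b₀ : Multiplicative (ZMod n) := (b₀' : Multiplicative (ZMod n)) with hb₀
  have hb₀K : φ b₀ = 1 := MonoidHom.mem_ker.mp b₀'.2
  -- the member containing ⟨ofAdd 1, b₀⟩
  obtain ⟨H₁, hH₁S, hξ⟩ := hcover ⟨ofAdd 1, b₀⟩
  have hcomm : Commute (inl (ofAdd (1 : ZMod p)) :
      Multiplicative (ZMod p) ⋊[φ] Multiplicative (ZMod n)) (inr b₀) := by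
    unfold Commute SemiconjBy
    ext <;> simp [hb₀K]
  have hξeq : (⟨ofAdd 1, b₀⟩ : Multiplicative (ZMod p) ⋊[φ] Multiplicative (ZMod n)) =
      inl (ofAdd 1) * inr b₀ := by ext <;> simp
  have e2 : (inr b₀ : Multiplicative (ZMod p) ⋊[φ] Multiplicative (ZMod n)) ^ n = 1 := by
    rw [← map_pow, exp_n, map_one]
  have e1 : (inl (ofAdd (1 : ZMod p)) : Multiplicative (ZMod p) ⋊[φ] Multiplicative (ZMod n)) ^ n
      = inl (ofAdd ((n : ZMod p) * 1)) := by
    rw [← map_pow, ofAdd_pow_zmod]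
  have hξn : (⟨ofAdd 1, b₀⟩ : Multiplicative (ZMod p) ⋊[φ] Multiplicative (ZMod n)) ^ n =
      inl (ofAdd ((n : ZMod p) * 1)) := by
    rw [hξeq, hcomm.mul_pow, e1, e2, mul_one]
  have hnne : ((n : ZMod p)) * 1 ≠ 0 := by
    rw [mul_one]
    intro h
    exact hpn ((ZMod.natCast_eq_zero_iff n p).mp h)
  have hCp : ∀ l : ZMod p,
      (inl (ofAdd l) : Multiplicative (ZMod p) ⋊[φ] Multiplicative (ZMod n)) ∈ H₁ := by
    apply inl_mem φ (z := (⟨ofAdd 1, b₀⟩ : _) ^ n) (pow_mem hξ n)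
    · rw [hξn]; rfl
    · rw [hξn]
      show ofAdd _ ≠ ofAdd 0
      simpa using hnne
  have hCp' : ∀ x : Multiplicative (ZMod p),
      (inl x : Multiplicative (ZMod p) ⋊[φ] Multiplicative (ZMod n)) ∈ H₁ := by
    intro x; have := hCp (toAdd x); rwa [ofAdd_toAdd] at this
  have hinrb₀ : (inr b₀ : Multiplicative (ZMod p) ⋊[φ] Multiplicative (ZMod n)) ∈ H₁ := by
    have : (inr b₀ : Multiplicative (ZMod p) ⋊[φ] Multiplicative (ZMod n)) =
        (inl (ofAdd 1))⁻¹ * ⟨ofAdd 1, b₀⟩ := by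
      rw [hξeq, inv_mul_cancel_left]
    rw [this]
    exact mul_mem (inv_mem (hCp' _)) hξ
  have hker : ∀ y : Multiplicative (ZMod p) ⋊[φ] Multiplicative (ZMod n),
      φ y.right = 1 → y ∈ H₁ := by
    intro y hy
    obtain ⟨k, hk⟩ := hb₀gen ⟨y.right, MonoidHom.mem_ker.mpr hy⟩
    have hk' : b₀ ^ k = y.right := by
      have h3 := congrArg (Subtype.val) hk
      simpa [hb₀] using h3
    have h2 : (inr y.right : Multiplicative (ZMod p) ⋊[φ] Multiplicative (ZMod n)) ∈ H₁ := by
      rw [← hk', map_zpow]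
      exact zpow_mem hinrb₀ k
    rw [← inl_left_mul_inr_right y]
    exact mul_mem (hCp' y.left) h2
  -- the subcover
  set S' : Set (Subgroup (Multiplicative (ZMod p) ⋊[φ] Multiplicative (ZMod n))) :=
    insert H₁ (Set.range (CC φ)) with hS'
  have hsub : S' ⊆ S := by
    rw [hS']
    apply Set.insert_subset hH₁S
    rintro _ ⟨a, rfl⟩
    exact hCmem a
  have hcov' : IsCover S' := by
    constructor
    · intro H hH; exact hproper H (hsub hH)
    · intro y
      by_cases hy : φ y.right = 1
      · exact ⟨H₁, Set.mem_insert _ _, hker y hy⟩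
      · refine ⟨CC φ (toAdd y.left * (1 - cc φ y.right)⁻¹),
          Set.mem_insert_of_mem _ ⟨_, rfl⟩, ?_⟩
        rw [mem_CC]
        have hcne : 1 - cc φ y.right ≠ 0 := by
          rw [sub_ne_zero]
          intro h
          exact hy ((cc_eq_one_iff φ y.right).mp h.symm)
        rw [mul_assoc, inv_mul_cancel₀ hcne, mul_one]
  have hSeq : S' = S := by
    by_contra h
    exact hirr S' (ssubset_of_subset_of_ne hsub h) hcov'
  rw [← hSeq, hS']
  have hH₁notC : H₁ ∉ Set.range (CC φ) := by
    rintro ⟨a, ha⟩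
    have h1 := hCp 1
    rw [← ha, mem_CC] at h1
    simp only [left_inl, right_inl, toAdd_ofAdd, cc_one, sub_self, mul_zero] at h1
    exact one_ne_zero h1
  have hinj : Function.Injective (CC φ : ZMod p → _) := by
    intro a a' h
    have hm := xx_mem_CC φ a
    rw [h, mem_CC] at hm
    have hm' : a * (1 - cc φ (gen n)) = a' * (1 - cc φ (gen n)) := hm
    have hne : 1 - cc φ (gen n) ≠ 0 := by
      rw [sub_ne_zero]
      exact fun h' => cc_gen_ne_one φ hφ h'.symm
    exact mul_right_cancel₀ hne hm'
  rw [Set.ncard_insert_of_notMem hH₁notC (Set.finite_range _)]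
  rw [← Set.image_univ, Set.ncard_image_of_injective _ hinj, Set.ncard_univ,
    Nat.card_eq_fintype_card, ZMod.card]
end

section
/- If G = H × C with gcd(|H|,|C|) = 1, C cyclic, and H a finite non-cyclic group all of whose irredundant covers have the same size, then every irredundant cover of G has the form {K × C : K ∈ 𝓗} for some irredundant cover 𝓗 of H; in particular G admits only one-sized covers. -/
/-! If `gcd(|H|, |C|) = 1`, a subgroup of `H × C` containing `(h, c)` contains its power
`(h, c) ^ (|H| m) = (1, c)` for suitable `m`. So if `g` generates `C`, every member of a cover
of `H × C` that contains some `(h, g)` contains `1 × C`, hence has the form `K × C`. These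
members already cover `H × C`, so in an irredundant cover they are all of it; and `K ↦ K × C`
(the preimage under the projection) matches irredundant covers of `H` bijectively with
irredundant covers of `H × C` of this form. -/

lemma IsIrredundantCover.eq_of_subset {G : Type*} [Group G] {S T : Set (Subgroup G)}
    (hS : IsIrredundantCover S) (hTS : T ⊆ S) (hT : IsCover T) : T = S := by
  by_contra hne
  exact hS.2 T (hTS.ssubset_of_ne hne) hT

section Comap

variable {G Q : Type*} [Group G] [Group Q] {f : G →* Q}

lemma isCover_image_comap_iff (hf : Function.Surjective f) {T : Set (Subgroup Q)} :
    IsCover (Subgroup.comap f '' T) ↔ IsCover T := by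
  have comap_ne_top {K : Subgroup Q} : K.comap f ≠ ⊤ ↔ K ≠ ⊤ := by
    rw [← Subgroup.comap_top f, (Subgroup.comap_injective hf).ne_iff]
  simp only [IsCover, Set.forall_mem_image, Set.exists_mem_image, Subgroup.mem_comap, comap_ne_top]
  exact and_congr_right fun _ => (hf.forall (p := fun q => ∃ K ∈ T, q ∈ K)).symm

lemma isIrredundantCover_image_comap_iff (hf : Function.Surjective f) {T : Set (Subgroup Q)} :
    IsIrredundantCover (Subgroup.comap f '' T) ↔ IsIrredundantCover T := by
  have image_ssubset_iff {A B : Set (Subgroup Q)} :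
      Subgroup.comap f '' A ⊂ Subgroup.comap f '' B ↔ A ⊂ B :=
    (Subgroup.comap_injective hf).injOn.image_ssubset_image_iff (Set.subset_univ _)
      (Set.subset_univ _)
  refine and_congr (isCover_image_comap_iff hf) ⟨fun h T' hT' => ?_, fun h T' hT' => ?_⟩
  · rw [← isCover_image_comap_iff hf]
    exact h _ (image_ssubset_iff.mpr hT')
  · obtain ⟨T'', -, rfl⟩ := Set.subset_image_iff.mp hT'.1
    rw [isCover_image_comap_iff hf]
    exact h T'' (image_ssubset_iff.mp hT')

lemma IsIrredundantCover.exists_eq_image_comap (hf : Function.Surjective f)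
    {S : Set (Subgroup G)} (hS : IsIrredundantCover S)
    (hker : ∀ q : Q, ∃ M ∈ S, f.ker ≤ M ∧ q ∈ M.map f) :
    ∃ T : Set (Subgroup Q), IsIrredundantCover T ∧ S = Subgroup.comap f '' T := by
  set T : Set (Subgroup Q) := {K | K.comap f ∈ S}
  have hT : IsCover T := by
    refine ⟨fun K hK hK_top => hS.1.1 _ hK (hK_top ▸ Subgroup.comap_top f), fun q => ?_⟩
    obtain ⟨M, hMS, hkerM, hqM⟩ := hker q
    refine ⟨M.map f, ?_, hqM⟩
    show (M.map f).comap f ∈ S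
    rwa [Subgroup.comap_map_eq_self hkerM]
  have hS_eq := hS.eq_of_subset (Set.image_subset_iff.mpr fun _ hK => hK)
    ((isCover_image_comap_iff hf).mpr hT)
  exact ⟨T, (isIrredundantCover_image_comap_iff hf).mp (hS_eq ▸ hS), hS_eq.symm⟩

end Comap

section Coprime

variable {H C : Type*} [Group H] [Group C] {M : Subgroup (H × C)} {h : H} {c : C}

lemma Subgroup.one_mk_mem_of_coprime (hcop : (Nat.card H).Coprime (orderOf c))
    (hM : (h, c) ∈ M) : (1, c) ∈ M := by
  obtain ⟨m, hm⟩ := exists_pow_eq_self_of_coprime hcop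
  have : ((h, c) ^ Nat.card H) ^ m = ((1 : H), c) := by simp [pow_card_eq_one', hm]
  exact this ▸ M.pow_mem (M.pow_mem hM _) m

lemma Subgroup.ker_fst_le_of_mk_mem (hcop : (Nat.card H).Coprime (Nat.card C)) {g : C}
    (hg : ∀ x, x ∈ Subgroup.zpowers g) (hM : (h, g) ∈ M) : (MonoidHom.fst H C).ker ≤ M := by
  have hg1 : ((1 : H), g) ∈ M :=
    one_mk_mem_of_coprime (hcop.coprime_dvd_right (_root_.orderOf_dvd_natCard g)) hM
  rintro ⟨x, y⟩ hxy
  obtain ⟨k, rfl⟩ := Subgroup.mem_zpowers_iff.mp (hg y)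
  obtain rfl : x = 1 := hxy
  have : ((1 : H), g) ^ k = (1, g ^ k) := by simp
  exact this ▸ M.zpow_mem hg1 k

end Coprime

theorem stmt17_general (H C : Type*) [Group H] [Group C]
    (hone : OnlyOneSizedCovers H) (hC : IsCyclic C)
    (hcop : Nat.Coprime (Nat.card H) (Nat.card C)) :
    (∀ S : Set (Subgroup (H × C)), IsIrredundantCover S →
      ∃ T : Set (Subgroup H), IsIrredundantCover T ∧
        S = (fun K : Subgroup H => K.prod (⊤ : Subgroup C)) '' T) ∧
    OnlyOneSizedCovers (H × C) := by
  obtain ⟨g, hg⟩ := hC.exists_generator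
  have hfst : Function.Surjective (MonoidHom.fst H C) := Prod.fst_surjective
  have hstructure (S : Set (Subgroup (H × C))) (hS : IsIrredundantCover S) :
      ∃ T : Set (Subgroup H), IsIrredundantCover T ∧
        S = Subgroup.comap (MonoidHom.fst H C) '' T := by
    refine hS.exists_eq_image_comap hfst fun x => ?_
    obtain ⟨M, hMS, hM⟩ := hS.1.2 (x, g)
    exact ⟨M, hMS, M.ker_fst_le_of_mk_mem hcop hg hM, ⟨_, hM, rfl⟩⟩
  have prod_top_eq : (fun K : Subgroup H => K.prod (⊤ : Subgroup C)) =
      Subgroup.comap (MonoidHom.fst H C) := funext Subgroup.prod_top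
  refine ⟨prod_top_eq ▸ hstructure, fun S₁ S₂ hS₁ hS₂ => ?_⟩
  obtain ⟨T₁, hT₁, rfl⟩ := hstructure S₁ hS₁
  obtain ⟨T₂, hT₂, rfl⟩ := hstructure S₂ hS₂
  rw [Set.ncard_image_of_injective _ (Subgroup.comap_injective hfst),
    Set.ncard_image_of_injective _ (Subgroup.comap_injective hfst)]
  exact hone T₁ T₂ hT₁ hT₂

theorem stmt17 (H C : Type*) [Group H] [Group C] [Finite H] [Finite C]
    (hH : ¬ IsCyclic H) (hone : OnlyOneSizedCovers H) (hC : IsCyclic C)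
    (hcop : Nat.Coprime (Nat.card H) (Nat.card C)) :
    (∀ S : Set (Subgroup (H × C)), IsIrredundantCover S →
      ∃ T : Set (Subgroup H), IsIrredundantCover T ∧
        S = (fun K : Subgroup H => K.prod (⊤ : Subgroup C)) '' T) ∧
    OnlyOneSizedCovers (H × C) :=
  stmt17_general H C hone hC hcop
end

section
/- For n > 2 and p prime, the family of all subgroups of order p of the elementary abelian group Cpⁿ is an irredundant cover of Cpⁿ, while σ(Cpⁿ) = p+1; hence for n > 2 the group Cpⁿ has an irredundant cover that is not of minimal size. -/
noncomputable def coverNumber (G : Type*) [Group G] : ℕ :=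
  sInf {n : ℕ | ∃ S : Set (Subgroup G), IsCover S ∧ S.ncard = n}

/-!
Every nonidentity element of `Cpⁿ` has order `p`, so it lies in exactly one subgroup of order
`p`: these subgroups cover the group and none of them can be dropped. Counting nonidentity
elements, there are `(pⁿ - 1)/(p - 1) > p + 1` of them once `n ≥ 3`. On the other hand a proper
subgroup of a `p`-group has index at least `p`, so the same count shows that every cover has more
than `p` members, and the `p + 1` kernels of `x ↦ x₀ - a x₁` (`a ∈ 𝔽_p`) and `x ↦ x₁` form a cover.
-/

open Subgroup

section PrimeOrder

variable {G : Type*} [Group G] {p : ℕ} [Fact p.Prime]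

theorem Subgroup.eq_zpowers_of_card_eq_prime {H : Subgroup G} (hH : Nat.card H = p) {g : G}
    (hgH : g ∈ H) (hg : g ≠ 1) : H = zpowers g := by
  have htop := zpowers_eq_top_of_prime_card hH (g := ⟨g, hgH⟩) (by simpa using hg)
  simpa [MonoidHom.map_zpowers, ← MonoidHom.range_eq_map] using
    (congrArg (map H.subtype) htop).symm

theorem isIrredundantCover_setOf_card_eq_prime (h : IsCover {H : Subgroup G | Nat.card H = p}) :
    IsIrredundantCover {H : Subgroup G | Nat.card H = p} := by
  refine ⟨h, fun T hT hTcov => ?_⟩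
  obtain ⟨H, hHp, hHT⟩ := Set.exists_of_ssubset hT
  have hHp : Nat.card H = p := hHp
  obtain ⟨g, hgH, hg⟩ := H.bot_or_exists_ne_one.resolve_left fun hbot => by
    simp [hbot, (Fact.out : p.Prime).ne_one.symm] at hHp
  obtain ⟨K, hKT, hgK⟩ := hTcov.2 g
  have hKp : Nat.card K = p := hT.1 hKT
  rw [eq_zpowers_of_card_eq_prime hKp hgK hg, ← eq_zpowers_of_card_eq_prime hHp hgH hg] at hKT
  exact hHT hKT

theorem isCover_setOf_card_eq_prime [Nontrivial G] (hexp : ∀ g : G, g ^ p = 1)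
    (hcard : Nat.card G ≠ p) : IsCover {H : Subgroup G | Nat.card H = p} := by
  have card_zpowers {g : G} (hg : g ≠ 1) : Nat.card (zpowers g) = p := by
    rw [Nat.card_zpowers, orderOf_eq_prime (hexp g) hg]
  refine ⟨fun H (hH : Nat.card H = p) htop => hcard (by rwa [htop, card_top] at hH), fun g => ?_⟩
  by_cases hg : g = 1
  · obtain ⟨x, hx⟩ := exists_ne (1 : G)
    exact ⟨zpowers x, card_zpowers hx, hg ▸ one_mem _⟩
  · exact ⟨zpowers g, card_zpowers hg, mem_zpowers g⟩

end PrimeOrder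

section Counting

variable {G : Type*} [Group G] [Finite G]

theorem card_sub_one_le_ncard_mul {S : Set (Subgroup G)} (hS : ∀ g : G, ∃ H ∈ S, g ∈ H) {c : ℕ}
    (hc : ∀ H ∈ S, Nat.card H ≤ c) : Nat.card G - 1 ≤ S.ncard * (c - 1) := by
  have hsub : ({1}ᶜ : Set G) ⊆ ⋃ H ∈ S.toFinite.toFinset, (H : Set G) \ {1} := fun g hg => by
    obtain ⟨H, hHS, hgH⟩ := hS g
    exact Set.mem_biUnion (S.toFinite.mem_toFinset.mpr hHS) ⟨hgH, hg⟩
  calc Nat.card G - 1 = ({1}ᶜ : Set G).ncard := by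
        rw [Set.ncard_compl, Set.ncard_singleton]
    _ ≤ ∑ H ∈ S.toFinite.toFinset, ((H : Set G) \ {1}).ncard :=
        (Set.ncard_le_ncard hsub).trans (Finset.set_ncard_biUnion_le _ _)
    _ ≤ S.ncard * (c - 1) := by
        rw [Set.ncard_eq_toFinset_card S]
        refine Finset.sum_le_card_nsmul _ _ _ fun H hH => ?_
        rw [Set.ncard_sdiff_singleton_of_mem H.one_mem, ← Nat.card_coe_set_eq]
        exact Nat.sub_le_sub_right (hc H (S.toFinite.mem_toFinset.mp hH)) 1

variable {p : ℕ} [Fact p.Prime]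

theorem IsPGroup.card_mul_le_of_ne_top (hG : IsPGroup p G) {H : Subgroup G} (hH : H ≠ ⊤) :
    Nat.card H * p ≤ Nat.card G := by
  obtain ⟨k, hk⟩ := hG.index H
  have hk0 : k ≠ 0 := by rintro rfl; exact hH (index_eq_one.mp hk)
  rw [← H.card_mul_index, hk]
  exact Nat.mul_le_mul_left _ (Nat.le_self_pow hk0 p)

theorem IsPGroup.lt_ncard_of_isCover (hG : IsPGroup p G) {S : Set (Subgroup G)} (hS : IsCover S) :
    p < S.ncard := by
  have hp := (Fact.out : p.Prime).two_le
  obtain ⟨q, hq⟩ : p ∣ Nat.card G := hG.card_eq_or_dvd.resolve_left fun h1 => by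
    obtain ⟨H, hHS, -⟩ := hS.2 1
    refine hS.1 H hHS (eq_top_of_card_eq H ?_)
    exact (Nat.dvd_one.mp (h1 ▸ H.card_subgroup_dvd_card)).trans h1.symm
  have hq0 : q ≠ 0 := by rintro rfl; exact Nat.card_pos.ne' (by simpa using hq)
  have hcount := card_sub_one_le_ncard_mul hS.2 (c := q) fun H hH => by
    have := hG.card_mul_le_of_ne_top (hS.1 H hH)
    rw [hq] at this
    nlinarith
  by_contra! hle
  have := Nat.mul_le_mul_right (q - 1) hle
  rw [hq, Nat.mul_sub_one] at hcount
  rw [Nat.mul_sub_one, Nat.mul_sub_one] at this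
  have : p ≤ p * q := Nat.le_mul_of_pos_right p (by omega)
  omega

end Counting

theorem coverNumber_eq_of_forall_le_ncard {G : Type*} [Group G] {k : ℕ}
    (hlow : ∀ S : Set (Subgroup G), IsCover S → k ≤ S.ncard)
    (hup : ∃ S : Set (Subgroup G), IsCover S ∧ S.ncard ≤ k) : coverNumber G = k := by
  obtain ⟨S, hS, hSk⟩ := hup
  unfold coverNumber
  refine le_antisymm (le_trans (Nat.sInf_le ⟨S, hS, rfl⟩) hSk) (le_csInf ⟨_, S, hS, rfl⟩ ?_)
  rintro _ ⟨T, hT, rfl⟩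
  exact hlow T hT

section Hyperplanes

variable {ι K : Type*} [Field K]

def coordFunctional (i j : ι) : Option K → (ι → K) →ₗ[K] K
  | none => LinearMap.proj j
  | some a => LinearMap.proj i - a • LinearMap.proj j

def coordHyperplane (i j : ι) (o : Option K) : Subgroup (Multiplicative (ι → K)) :=
  AddSubgroup.toSubgroup (LinearMap.ker (coordFunctional i j o)).toAddSubgroup

theorem mem_coordHyperplane {i j : ι} {o : Option K} {g : Multiplicative (ι → K)} :
    g ∈ coordHyperplane i j o ↔ coordFunctional i j o (Multiplicative.toAdd g) = 0 :=
  Iff.rfl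

theorem isCover_range_coordHyperplane {i j : ι} (hij : i ≠ j) :
    IsCover (Set.range (coordHyperplane (K := K) i j)) := by
  classical
  refine ⟨?_, fun g => ?_⟩
  · rintro _ ⟨o, rfl⟩ htop
    have hmem (v : ι → K) : Multiplicative.ofAdd v ∈ coordHyperplane i j o :=
      htop ▸ Subgroup.mem_top _
    cases o with
    | none => simpa [mem_coordHyperplane, coordFunctional] using hmem (Pi.single j 1)
    | some a => simpa [mem_coordHyperplane, coordFunctional, hij] using hmem (Pi.single i 1)
  · obtain ⟨x, rfl⟩ := Multiplicative.ofAdd.surjective g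
    by_cases hx : x j = 0
    · exact ⟨_, Set.mem_range_self none, by simpa [mem_coordHyperplane, coordFunctional]⟩
    · refine ⟨_, Set.mem_range_self (some (x i / x j)), ?_⟩
      simp [mem_coordHyperplane, coordFunctional, div_mul_cancel₀ _ hx]

theorem ncard_range_coordHyperplane_le [Finite K] (i j : ι) :
    (Set.range (coordHyperplane (K := K) i j)).ncard ≤ Nat.card K + 1 := by
  rw [← Nat.card_coe_set_eq, ← Finite.card_option]
  exact Finite.card_range_le _

end Hyperplanes

theorem Multiplicative.pi_zmod_pow_eq_one {ι : Type*} (p : ℕ) (g : Multiplicative (ι → ZMod p)) :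
    g ^ p = 1 :=
  Multiplicative.toAdd.injective (by ext i; simp)

theorem card_multiplicative_fin_zmod (p n : ℕ) [NeZero p] :
    Nat.card (Multiplicative (Fin n → ZMod p)) = p ^ n := by
  simp [Nat.card_eq_fintype_card, ZMod.card]

theorem stmt18 (p n : ℕ) (hp : p.Prime) (hn : 2 < n) :
    IsIrredundantCover
      {H : Subgroup (Multiplicative (Fin n → ZMod p)) | Nat.card H = p} ∧
    coverNumber (Multiplicative (Fin n → ZMod p)) = p + 1 ∧
    ∃ S : Set (Subgroup (Multiplicative (Fin n → ZMod p))),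
      IsIrredundantCover S ∧ S.ncard ≠ p + 1 := by
  have : Fact p.Prime := ⟨hp⟩
  have hcard := card_multiplicative_fin_zmod p n
  have hp_lt : p < p ^ n := by
    simpa using Nat.pow_lt_pow_right hp.one_lt (show 1 < n by omega)
  have : Nontrivial (Multiplicative (Fin n → ZMod p)) :=
    Finite.one_lt_card_iff_nontrivial.mp (hcard ▸ hp.one_lt.trans hp_lt)
  have hcover :=
    isCover_setOf_card_eq_prime (Multiplicative.pi_zmod_pow_eq_one p) (hcard ▸ hp_lt.ne')
  have hirr := isIrredundantCover_setOf_card_eq_prime hcover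
  have hσ : coverNumber (Multiplicative (Fin n → ZMod p)) = p + 1 :=
    coverNumber_eq_of_forall_le_ncard (fun S hS => (IsPGroup.of_card hcard).lt_ncard_of_isCover hS)
      ⟨_, isCover_range_coordHyperplane (i := ⟨0, by omega⟩) (j := ⟨1, by omega⟩)
        (by simp [Fin.ext_iff]),
        (ncard_range_coordHyperplane_le _ _).trans_eq (by rw [Nat.card_zmod])⟩
  refine ⟨hirr, hσ, _, hirr, fun hS => ?_⟩
  have hcount := card_sub_one_le_ncard_mul hcover.2 (c := p) fun H hH => le_of_eq hH
  rw [hS, hcard] at hcount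
  have hsq : (p + 1) * (p - 1) + 1 = p ^ 2 := by zify [hp.one_le]; ring
  have hcube : p ^ 2 < p ^ 3 := Nat.pow_lt_pow_right hp.one_lt (by norm_num)
  have hn3 : p ^ 3 ≤ p ^ n := Nat.pow_le_pow_right hp.pos hn
  omega
end
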